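/- For all n ≥ 3, the graceful chromatic number of the closed ladder L_n = P_n □ P_2 equals 5. -/
import Mathlib

/-- A graceful `k`-coloring of `G`: a proper vertex coloring with colors in
`{1, ..., k}` whose induced edge coloring `f*(uv) = |f u - f v|` is a proper
edge coloring. -/
def IsGracefulColoring {V : Type*} (G : SimpleGraph V) (k : ℕ) (f : V → ℕ) : Prop :=
  (∀ v, 1 ≤ f v ∧ f v ≤ k) ∧
  (∀ ⦃u v⦄, G.Adj u v → f u ≠ f v) ∧
  (∀ ⦃u v w⦄, G.Adj u v → G.Adj u w → v ≠ w →
    ((f u : ℤ) - f v).natAbs ≠ ((f u : ℤ) - f w).natAbs)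

/-- The graceful chromatic number: the least `k` admitting a graceful `k`-coloring. -/
noncomputable def gracefulChromaticNumber {V : Type*} (G : SimpleGraph V) : ℕ :=
  sInf {k | ∃ f : V → ℕ, IsGracefulColoring G k f}

/-- The closed ladder `L_n`: vertices `(r, i)` with rows `r = 0` (the `x_i`) and
`r = 1` (the `y_i`); rail edges `x_i x_{i+1}`, `y_i y_{i+1}` and rung edges `x_i y_i`. -/
def closedLadder (n : ℕ) : SimpleGraph (Fin 2 × Fin n) :=
  SimpleGraph.fromRel (fun a b =>
    (a.1 = b.1 ∧ a.2.val + 1 = b.2.val) ∨ (a.2 = b.2 ∧ a.1 ≠ b.1))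

/-! ### Auxiliary definitions for the upper bound -/

/-- The periodic color table `1, 2, 4, 5`. -/
def cTab : ℕ → ℕ := fun t => if t = 0 then 1 else if t = 1 then 2 else if t = 2 then 4 else 5

lemma cTab_bound : ∀ a : Fin 4, 1 ≤ cTab a.val ∧ cTab a.val ≤ 5 := by decide

lemma cTab_inj : ∀ a b : Fin 4, a ≠ b → cTab a.val ≠ cTab b.val := by decide

lemma cTab_lab : ∀ a b b' : Fin 4, b ≠ a → b' ≠ a → b ≠ b' →
    ((cTab a.val : ℤ) - cTab b.val).natAbs ≠ ((cTab a.val : ℤ) - cTab b'.val).natAbs := by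
  decide

lemma adj_iff {n : ℕ} {u v : Fin 2 × Fin n} :
    (closedLadder n).Adj u v ↔ u ≠ v ∧
      ((u.1 = v.1 ∧ u.2.val + 1 = v.2.val) ∨ (u.2 = v.2 ∧ u.1 ≠ v.1) ∨
       (v.1 = u.1 ∧ v.2.val + 1 = u.2.val) ∨ (v.2 = u.2 ∧ v.1 ≠ u.1)) := by
  rw [closedLadder, SimpleGraph.fromRel_adj]
  tauto

lemma madj {n : ℕ} {u v : Fin 2 × Fin n} (h : (closedLadder n).Adj u v) :
    (u.2.val + 2 * u.1.val) % 4 ≠ (v.2.val + 2 * v.1.val) % 4 := by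
  rw [adj_iff] at h
  obtain ⟨-, h⟩ := h
  have h1 := u.1.is_lt; have h2 := v.1.is_lt
  simp only [Fin.ext_iff, ne_eq] at h
  omega

lemma mdist {n : ℕ} {u v w : Fin 2 × Fin n} (hv : (closedLadder n).Adj u v)
    (hw : (closedLadder n).Adj u w) (hvw : v ≠ w) :
    (v.2.val + 2 * v.1.val) % 4 ≠ (w.2.val + 2 * w.1.val) % 4 := by
  rw [adj_iff] at hv hw
  obtain ⟨-, hv⟩ := hv
  obtain ⟨-, hw⟩ := hw
  have h1 := u.1.is_lt; have h2 := v.1.is_lt; have h3 := w.1.is_lt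
  simp only [Fin.ext_iff, ne_eq] at hv hw
  simp only [ne_eq, Prod.ext_iff, Fin.ext_iff, not_and] at hvw
  omega

lemma upper (n : ℕ) :
    IsGracefulColoring (closedLadder n) 5
      (fun a => cTab ((a.2.val + 2 * a.1.val) % 4)) := by
  have hm : ∀ a : Fin 2 × Fin n, (a.2.val + 2 * a.1.val) % 4 < 4 :=
    fun a => Nat.mod_lt _ (by norm_num)
  refine ⟨fun v => cTab_bound ⟨_, hm v⟩, ?_, ?_⟩
  · intro u v h
    exact cTab_inj ⟨_, hm u⟩ ⟨_, hm v⟩ (by simpa [Fin.ext_iff] using madj h)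
  · intro u v w hv hw hvw
    exact cTab_lab ⟨_, hm u⟩ ⟨_, hm v⟩ ⟨_, hm w⟩
      (by simpa [Fin.ext_iff] using (madj hv).symm)
      (by simpa [Fin.ext_iff] using (madj hw).symm)
      (by simpa [Fin.ext_iff] using mdist hv hw hvw)

/-! ### Lower bound -/

instance : DecidableRel (closedLadder 3).Adj := fun a b =>
  decidable_of_iff _ (SimpleGraph.fromRel_adj _ a b).symm

def F (x0 x1 x2 y0 y1 y2 : Fin 4) : Fin 2 × Fin 3 → ℕ := fun v =>
  (if v.1 = 0 then (if v.2 = 0 then x0 else if v.2 = 1 then x1 else x2)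
   else (if v.2 = 0 then y0 else if v.2 = 1 then y1 else y2)).val + 1

set_option maxRecDepth 10000 in
set_option maxHeartbeats 4000000 in
lemma key : ∀ x0 x1 x2 y0 y1 y2 : Fin 4,
    ¬ IsGracefulColoring (closedLadder 3) 4 (F x0 x1 x2 y0 y1 y2) := by
  unfold IsGracefulColoring F
  decide

lemma L3_no4 : ¬ ∃ f : Fin 2 × Fin 3 → ℕ, IsGracefulColoring (closedLadder 3) 4 f := by
  rintro ⟨f, hf⟩
  have h1 := hf.1
  set g : Fin 2 × Fin 3 → Fin 4 := fun v => ⟨f v - 1, by have := h1 v; omega⟩ with hg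
  have : F (g (0,0)) (g (0,1)) (g (0,2)) (g (1,0)) (g (1,1)) (g (1,2)) = f := by
    funext v
    have := h1 v
    have h2 : ∀ w, f w - 1 + 1 = f w := fun w => by have := h1 w; omega
    fin_cases v <;> exact h2 _
  exact key _ _ _ _ _ _ (this ▸ hf)

lemma lower (n : ℕ) (hn : 3 ≤ n) :
    ¬ ∃ f : Fin 2 × Fin n → ℕ, IsGracefulColoring (closedLadder n) 4 f := by
  rintro ⟨f, hf⟩
  set ι : Fin 2 × Fin 3 → Fin 2 × Fin n :=
    fun a => (a.1, ⟨a.2.val, lt_of_lt_of_le a.2.is_lt hn⟩) with hι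
  have hinj : Function.Injective ι := by
    intro a b hab
    simp only [hι, Prod.ext_iff, Fin.ext_iff] at hab ⊢
    exact hab
  have hadj : ∀ {a b : Fin 2 × Fin 3},
      (closedLadder 3).Adj a b → (closedLadder n).Adj (ι a) (ι b) := by
    intro a b hab
    rw [adj_iff] at hab ⊢
    refine ⟨fun h => hab.1 (hinj h), ?_⟩
    simpa only [hι, Fin.ext_iff] using hab.2
  exact L3_no4 ⟨f ∘ ι, fun v => hf.1 (ι v),
    fun u v h => hf.2.1 (hadj h),
    fun u v w hv hw hvw => hf.2.2 (hadj hv) (hadj hw) (fun h => hvw (hinj h))⟩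

theorem gracefulChromaticNumber_closedLadder (n : ℕ) (hn : 3 ≤ n) :
    gracefulChromaticNumber (closedLadder n) = 5 := by
  have h5 : 5 ∈ {k | ∃ f : Fin 2 × Fin n → ℕ, IsGracefulColoring (closedLadder n) k f} :=
    ⟨_, upper n⟩
  refine le_antisymm (Nat.sInf_le h5) (le_csInf ⟨5, h5⟩ ?_)
  rintro k ⟨f, hf⟩
  by_contra hk
  push_neg at hk
  exact lower n hn ⟨f, ⟨fun v => ⟨(hf.1 v).1, le_trans (hf.1 v).2 (by omega)⟩,
    hf.2.1, hf.2.2⟩⟩
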